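/- arXiv:1706.07317 — 2 statements merged into one kernel-verified Lean document; each statement's English description precedes it below -/
import Mathlib

section
/- Let G be a regionally expansive t.d.l.c. group with trivial quasi-center. Then every filtering family of non-trivial closed normal subgroups of G has non-trivial intersection; in particular, every non-trivial closed normal subgroup of G contains a minimal non-trivial closed normal subgroup of G. -/
open scoped Pointwise

open scoped Pointwise

/-- The quasi-center of a topological group: the set of elements with open centralizer. -/
def QuasiCenter (G : Type*) [Group G] [TopologicalSpace G] : Set G :=
  {g : G | IsOpen ((Subgroup.centralizer {g} : Subgroup G) : Set G)}

/-- A topological group is compactly generated if it is generated by a compact subset. -/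
def IsCompactlyGeneratedGroup (G : Type*) [Group G] [TopologicalSpace G] : Prop :=
  ∃ S : Set G, IsCompact S ∧ Subgroup.closure S = ⊤

/-- A t.d.l.c. group is regionally expansive if it has a compactly generated open subgroup `O`
together with a compact open subgroup `W` of `O` whose normal core in `O` is trivial. -/
def RegionallyExpansive (G : Type*) [Group G] [TopologicalSpace G] : Prop :=
  ∃ O W : Subgroup G,
    IsOpen (O : Set G) ∧
    (∃ S : Set G, S ⊆ (O : Set G) ∧ IsCompact S ∧ Subgroup.closure S = O) ∧
    W ≤ O ∧ IsOpen (W : Set G) ∧ IsCompact (W : Set G) ∧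
    (W.subgroupOf O).normalCore = ⊥

/-- A topological group is topologically simple if it is non-trivial and its only closed
normal subgroups are the trivial subgroup and the whole group. -/
def TopologicallySimple (G : Type*) [Group G] [TopologicalSpace G] : Prop :=
  Nontrivial G ∧ ∀ N : Subgroup G, N.Normal → IsClosed (N : Set G) → N = ⊥ ∨ N = ⊤

/-- The monolith: the intersection of all non-trivial closed normal subgroups. -/
def Monolith (G : Type*) [Group G] [TopologicalSpace G] : Subgroup G :=
  ⨅ (N : Subgroup G) (_ : N ≠ ⊥) (_ : N.Normal) (_ : IsClosed (N : Set G)), N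

/-- A topological group is monolithic if its monolith is non-trivial. -/
def Monolithic (G : Type*) [Group G] [TopologicalSpace G] : Prop :=
  Monolith G ≠ ⊥

/-- A t.d.l.c. group is robustly monolithic if it is monolithic and the monolith is
non-discrete, regionally expansive and topologically simple. -/
def RobustlyMonolithic (G : Type*) [Group G] [TopologicalSpace G] : Prop :=
  Monolithic G ∧ ¬ DiscreteTopology ↥(Monolith G) ∧
    RegionallyExpansive ↥(Monolith G) ∧ TopologicallySimple ↥(Monolith G)

/-- [A]-semisimple: trivial quasi-center and no non-trivial abelian locally normal subgroup. -/
def ASemisimple (G : Type*) [Group G] [TopologicalSpace G] : Prop :=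
  QuasiCenter G = {1} ∧
    ∀ H : Subgroup G, IsOpen ((Subgroup.normalizer (H : Set G) : Subgroup G) : Set G) →
      (∀ a ∈ H, ∀ b ∈ H, a * b = b * a) → H = ⊥

/-- A minimal non-trivial closed normal subgroup. -/
def IsMinimalClosedNormal {G : Type*} [Group G] [TopologicalSpace G] (N : Subgroup G) : Prop :=
  N ≠ ⊥ ∧ N.Normal ∧ IsClosed (N : Set G) ∧
    ∀ M : Subgroup G, M ≠ ⊥ → M.Normal → IsClosed (M : Set G) → M ≤ N → M = N

/-- The quasi-centralizer of a subgroup `K` in `G`: the set of elements of `G` centralizing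
some open subgroup of `K`. -/
def QuasiCentralizer {G : Type*} [Group G] [TopologicalSpace G] (K : Subgroup G) : Set G :=
  {g : G | ∃ V : Subgroup G, V ≤ K ∧ IsOpen {k : ↥K | (k : G) ∈ V} ∧ ∀ v ∈ V, g * v = v * g}

/-- A SIN-group: a basis of identity neighborhoods consisting of conjugation-invariant
open sets. -/
def SINGroup (G : Type*) [Group G] [TopologicalSpace G] : Prop :=
  ∀ U ∈ nhds (1 : G), ∃ V : Set G, IsOpen V ∧ (1 : G) ∈ V ∧ V ⊆ U ∧
    ∀ g x : G, x ∈ V → g * x * g⁻¹ ∈ V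

/-- The quasi-centralizer of `K` in `H`: elements of `H` centralizing an open subgroup of `K`. -/
def QuasiCentralizerIn {G : Type*} [Group G] [TopologicalSpace G] (H K : Subgroup G) : Set G :=
  {h : G | h ∈ H ∧ ∃ V : Subgroup G, V ≤ K ∧ IsOpen {k : ↥K | (k : G) ∈ V} ∧
    ∀ v ∈ V, h * v = v * h}

/-- The commensurator of `K` in `H`: elements `h ∈ H` such that `K` and `hKh⁻¹` are
commensurate. -/
def CommensuratorIn {G : Type*} [Group G] (H K : Subgroup G) : Set G :=
  {h : G | h ∈ H ∧ Subgroup.Commensurable K (Subgroup.map (MulAut.conj h).toMonoidHom K)}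

/-- Topologically characteristically simple: the only closed subgroups invariant under every
topological group automorphism are trivial and the whole group. -/
def TopologicallyCharacteristicallySimple (G : Type*) [Group G] [TopologicalSpace G] : Prop :=
  ∀ N : Subgroup G, IsClosed (N : Set G) →
    (∀ φ : G ≃* G, Continuous ⇑φ → Continuous ⇑φ.symm → Subgroup.map φ.toMonoidHom N = N) →
    N = ⊥ ∨ N = ⊤


/-!
Let `O = ⟨S⟩` be a compactly generated open subgroup and `W ≤ O` a compact open subgroup with
trivial core in `O`. By compactness of `S ∪ S⁻¹` there is an open `V ∋ 1` whose conjugates by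
elements of `S ∪ S⁻¹` stay inside `W`. If a normal subgroup `N` satisfies `N ∩ W ⊆ V`, then
`N ∩ W` is normalised by the generators of `O`, hence lies in the core of `W` in `O` and is
trivial; so `N` is discrete and normal, and every element of `N` has open centraliser, i.e.
`N ≤ QZ(G)`.

For a filtering family `(Nᵢ)` of closed normal subgroups with trivial intersection, the compact
sets `Nᵢ ∩ (W \ V)` are directed and have empty intersection, so one of them is empty. Then
`Nᵢ ∩ W ⊆ V`, and `Nᵢ` is trivial as soon as `QZ(G) = 1`. Zorn's lemma applied to chains gives
the minimal closed normal subgroups.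
-/

open Subgroup Topology

universe u v

section Group

variable {G : Type*} [Group G]

lemma Subgroup.closure_le_normalizer_of_conj_mem {S : Set G} {H : Subgroup G}
    (h : ∀ s ∈ S ∪ S⁻¹, ∀ x ∈ H, s * x * s⁻¹ ∈ H) : closure S ≤ normalizer (H : Set G) := by
  refine (closure_le _).mpr fun s hs => mem_normalizer_iff.mpr fun x => ⟨h s (.inl hs) x, ?_⟩
  intro hx
  simpa [mul_assoc] using h s⁻¹ (.inr (by simpa using hs)) _ hx

lemma Subgroup.eq_bot_of_le_of_normalCore_subgroupOf_eq_bot {H W O : Subgroup G} (hHW : H ≤ W)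
    (hWO : W ≤ O) (hO : O ≤ normalizer (H : Set G)) (hcore : (W.subgroupOf O).normalCore = ⊥) :
    H = ⊥ := by
  have : (H.subgroupOf O).Normal := (normal_subgroupOf_iff_le_normalizer (hHW.trans hWO)).mpr hO
  have hle : H.subgroupOf O ≤ (W.subgroupOf O).normalCore :=
    normal_le_normalCore.mpr (subgroupOf_mono O hHW)
  rw [hcore, le_bot_iff, subgroupOf_eq_bot] at hle
  exact hle.eq_bot_of_le (hHW.trans hWO)

end Group

section TopologicalGroup

variable {G : Type*} [Group G] [TopologicalSpace G] [IsTopologicalGroup G]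

lemma IsCompact.eventually_forall_conj_mem {K U : Set G} (hK : IsCompact K) (hU : U ∈ 𝓝 1) :
    ∀ᶠ g in 𝓝 (1 : G), ∀ k ∈ K, k * g * k⁻¹ ∈ U := by
  refine hK.eventually_forall_of_forall_eventually fun k _ => ?_
  have hcont : Continuous fun p : G × G => p.2 * p.1 * p.2⁻¹ := by fun_prop
  exact hcont.continuousAt.preimage_mem_nhds (by simpa using hU)

/-- For `g` near `1` the commutator `[g, n]` lies in `N ∩ U`, hence is trivial. -/
lemma Subgroup.Normal.subset_quasiCenter {N : Subgroup G} (hN : N.Normal) {U : Set G}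
    (hU : U ∈ 𝓝 1) (hNU : (N : Set G) ∩ U ⊆ {1}) : (N : Set G) ⊆ QuasiCenter G := by
  intro n hn
  have hcont : Continuous fun g : G => g * n * g⁻¹ * n⁻¹ := by fun_prop
  have hnhds : (fun g : G => g * n * g⁻¹ * n⁻¹) ⁻¹' U ∈ 𝓝 1 :=
    hcont.continuousAt.preimage_mem_nhds (by simpa using hU)
  refine isOpen_of_mem_nhds _ (Filter.mem_of_superset hnhds fun g hg => ?_)
  have hcomm : g * n * g⁻¹ * n⁻¹ = 1 :=
    hNU ⟨N.mul_mem (hN.conj_mem n hn g) (N.inv_mem hn), hg⟩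
  rw [mul_inv_eq_one, mul_inv_eq_iff_eq_mul] at hcomm
  exact mem_centralizer_singleton_iff.mpr hcomm

lemma Subgroup.Normal.eq_bot_of_quasiCenter_eq {N : Subgroup G} (hN : N.Normal)
    (hqz : QuasiCenter G = {1}) {U : Set G} (hU : U ∈ 𝓝 1) (hNU : (N : Set G) ∩ U ⊆ {1}) :
    N = ⊥ :=
  (eq_bot_iff_forall N).mpr fun _ hn => by simpa [hqz] using hN.subset_quasiCenter hU hNU hn

lemma RegionallyExpansive.exists_inf_eq_bot_of_subset (hre : RegionallyExpansive G) :
    ∃ W : Subgroup G, IsOpen (W : Set G) ∧ IsCompact (W : Set G) ∧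
      ∃ V : Set G, IsOpen V ∧ (1 : G) ∈ V ∧
        ∀ N : Subgroup G, N.Normal → ((N ⊓ W : Subgroup G) : Set G) ⊆ V → N ⊓ W = ⊥ := by
  obtain ⟨O, W, -, ⟨S, -, hS, rfl⟩, hWO, hWopen, hWcomp, hcore⟩ := hre
  obtain ⟨V, hVconj, hVopen, h1V⟩ := eventually_nhds_iff.mp
    ((hS.union hS.inv).eventually_forall_conj_mem (hWopen.mem_nhds W.one_mem))
  refine ⟨W, hWopen, hWcomp, V, hVopen, h1V, fun N hN hNV => ?_⟩
  have hnorm : Subgroup.closure S ≤ normalizer ((N ⊓ W : Subgroup G) : Set G) :=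
    closure_le_normalizer_of_conj_mem fun s hs x hx =>
      mem_inf.mpr ⟨hN.conj_mem x (mem_inf.mp hx).1 s, hVconj x (hNV hx) s hs⟩
  exact eq_bot_of_le_of_normalCore_subgroupOf_eq_bot inf_le_right hWO hnorm hcore

theorem iInf_ne_bot_of_regionallyExpansive (hre : RegionallyExpansive G)
    (hqz : QuasiCenter G = {1}) {ι : Type*} [Nonempty ι] (N : ι → Subgroup G)
    (hbot : ∀ i, N i ≠ ⊥) (hclosed : ∀ i, IsClosed (N i : Set G)) (hnormal : ∀ i, (N i).Normal)
    (hfil : ∀ i j, ∃ k, N k ≤ N i ⊓ N j) : (⨅ i, N i) ≠ ⊥ := by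
  obtain ⟨W, hWopen, hWcomp, V, hVopen, h1V, hV⟩ := hre.exists_inf_eq_bot_of_subset
  intro hInf
  have hdir : Directed (· ⊇ ·) fun i => (N i : Set G) := fun i j =>
    (hfil i j).imp fun _ hk => ⟨hk.trans inf_le_left, hk.trans inf_le_right⟩
  have hempty : (W \ V : Set G) ∩ ⋂ i, (N i : Set G) = ∅ := by
    rw [← coe_iInf, hInf, coe_bot, Set.eq_empty_iff_forall_notMem]
    rintro _ ⟨⟨-, hV1⟩, rfl⟩
    exact hV1 h1V
  obtain ⟨i, hi⟩ := (hWcomp.diff hVopen).elim_directed_family_closed _ hclosed hempty hdir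
  have hsmall : N i ⊓ W = ⊥ := hV (N i) (hnormal i) fun x hx => by
    by_contra hxV
    exact Set.eq_empty_iff_forall_notMem.mp hi x ⟨⟨hx.2, hxV⟩, hx.1⟩
  refine hbot i ((hnormal i).eq_bot_of_quasiCenter_eq hqz (hWopen.mem_nhds W.one_mem) ?_)
  rw [← coe_inf, hsmall, coe_bot]

theorem sInf_ne_bot_of_isChain_of_regionallyExpansive (hre : RegionallyExpansive G)
    (hqz : QuasiCenter G = {1}) {c : Set (Subgroup G)} (hne : c.Nonempty)
    (hchain : IsChain (· ≤ ·) c) (hc : ∀ M ∈ c, M ≠ ⊥ ∧ M.Normal ∧ IsClosed (M : Set G)) :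
    sInf c ≠ ⊥ := by
  have : Nonempty c := hne.to_subtype
  rw [sInf_eq_iInf']
  refine iInf_ne_bot_of_regionallyExpansive hre hqz _ (fun M => (hc M M.2).1)
    (fun M => (hc M M.2).2.2) (fun M => (hc M M.2).2.1) fun i j => ?_
  rcases hchain.total i.2 j.2 with hij | hji
  · exact ⟨i, le_inf le_rfl hij⟩
  · exact ⟨j, le_inf hji le_rfl⟩

end TopologicalGroup

theorem exists_isMinimalClosedNormal_le {G : Type*} [Group G] [TopologicalSpace G]
    (h : ∀ c : Set (Subgroup G), c.Nonempty → IsChain (· ≤ ·) c →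
      (∀ M ∈ c, M ≠ ⊥ ∧ M.Normal ∧ IsClosed (M : Set G)) → sInf c ≠ ⊥)
    {N : Subgroup G} (hN : N ≠ ⊥) (hNn : N.Normal) (hNc : IsClosed (N : Set G)) :
    ∃ M : Subgroup G, IsMinimalClosedNormal M ∧ M ≤ N := by
  set s : Set (Subgroup G) := {M | M ≠ ⊥ ∧ M.Normal ∧ IsClosed (M : Set G)}
  have hchain : ∀ c ⊆ s, IsChain (· ≥ ·) c → ∀ y ∈ c, ∃ lb ∈ s, ∀ z ∈ c, lb ≤ z := by
    intro c hcs hc y hy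
    refine ⟨sInf c, ⟨h c ⟨y, hy⟩ hc.symm hcs, ?_, ?_⟩, fun z hz => sInf_le hz⟩
    · rw [sInf_eq_iInf']
      exact normal_iInf_normal fun M => (hcs M.2).2.1
    · rw [coe_sInf]
      exact isClosed_biInter fun M hM => (hcs hM).2.2
  obtain ⟨m, hNm, hm, hmin⟩ := zorn_le_nonempty₀ (α := (Subgroup G)ᵒᵈ) s hchain N ⟨hN, hNn, hNc⟩
  exact ⟨m, ⟨hm.1, hm.2.1, hm.2.2, fun M hM hMn hMc hMm =>
    le_antisymm hMm (hmin ⟨hM, hMn, hMc⟩ hMm)⟩, hNm⟩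

theorem stmt8_general (G : Type u) [Group G] [TopologicalSpace G] [IsTopologicalGroup G]
    (hre : RegionallyExpansive G) (hqz : QuasiCenter G = {1}) :
    (∀ (ι : Type v), Nonempty ι → ∀ N : ι → Subgroup G,
      (∀ i, N i ≠ ⊥) → (∀ i, IsClosed ((N i : Set G))) → (∀ i, (N i).Normal) →
      (∀ i j, ∃ k, N k ≤ N i ⊓ N j) → (⨅ i, N i) ≠ ⊥) ∧
    (∀ N : Subgroup G, N ≠ ⊥ → N.Normal → IsClosed (N : Set G) →
      ∃ M : Subgroup G, IsMinimalClosedNormal M ∧ M ≤ N) :=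
  ⟨fun _ _ => iInf_ne_bot_of_regionallyExpansive hre hqz,
    fun _ => exists_isMinimalClosedNormal_le fun _ hne hchain hc =>
      sInf_ne_bot_of_isChain_of_regionallyExpansive hre hqz hne hchain hc⟩

theorem stmt8 (G : Type u) [Group G] [TopologicalSpace G] [IsTopologicalGroup G] [T2Space G] [TotallyDisconnectedSpace G] [LocallyCompactSpace G]
    (hre : RegionallyExpansive G) (hqz : QuasiCenter G = {1}) :
    (∀ (ι : Type v), Nonempty ι → ∀ N : ι → Subgroup G,
      (∀ i, N i ≠ ⊥) → (∀ i, IsClosed ((N i : Set G))) → (∀ i, (N i).Normal) →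
      (∀ i j, ∃ k, N k ≤ N i ⊓ N j) → (⨅ i, N i) ≠ ⊥) ∧
    (∀ N : Subgroup G, N ≠ ⊥ → N.Normal → IsClosed (N : Set G) →
      ∃ M : Subgroup G, IsMinimalClosedNormal M ∧ M ≤ N) :=
  stmt8_general G hre hqz
end

section
/- Let G be a t.d.l.c. group and H a closed locally normal subgroup of G. If H is regionally expansive and the quasi-centralizer QC_G(H) is contained in H, then G is regionally expansive. -/
open scoped Pointwise

open scoped Pointwise

/-!
Choose a compact open subgroup `U` of the open normalizer of `H`, a compact open subgroup `W ≤ U`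
whose trace on `H` lies in `W_H`, and let `O` be generated by `U` and a compact generating set of
`O_H`. An element of the `O`-core of `W` lying in `H` lies in the `O_H`-core of `W_H`, so it is
trivial. Every element `x` of the core normalizes `H`, so its commutators with `H ∩ U` lie in `H`
and in the core and vanish: `x` quasi-centralizes `H`, hence `x ∈ H` and `x = 1`.
-/

theorem exists_isCompact_isClopen_subset {X : Type*} [TopologicalSpace X] [T2Space X]
    [LocallyCompactSpace X] [TotallyDisconnectedSpace X] {Ω : Set X} (hΩ : IsOpen Ω) {x : X}
    (hx : x ∈ Ω) : ∃ V : Set X, IsCompact V ∧ IsClopen V ∧ x ∈ V ∧ V ⊆ Ω := by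
  obtain ⟨K, hKcomp, hxK, hKΩ⟩ := exists_compact_subset hΩ hx
  obtain ⟨V, hVclopen, hxV, hVK⟩ :=
    loc_compact_Haus_tot_disc_of_zero_dim.mem_nhds_iff.1 (isOpen_interior.mem_nhds hxK)
  exact ⟨V, hKcomp.of_isClosed_subset hVclopen.isClosed (hVK.trans interior_subset), hVclopen,
    hxV, hVK.trans (interior_subset.trans hKΩ)⟩

section TopologicalGroup

variable {G : Type*} [Group G] [TopologicalSpace G] [IsTopologicalGroup G]

/-- The stabilizer of `V` under left translation is open, as it contains every symmetric
neighbourhood `T` of `1` with `T * V ⊆ V`, and it lies in `V` because `1 ∈ V`. -/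
theorem exists_openSubgroup_subset_of_isCompact_isOpen {V : Set G} (hVcomp : IsCompact V)
    (hVopen : IsOpen V) (h1V : (1 : G) ∈ V) :
    ∃ U : Subgroup G, IsOpen (U : Set G) ∧ (U : Set G) ⊆ V := by
  obtain ⟨T, hT, hTV⟩ := compact_open_separated_mul_left hVcomp hVopen subset_rfl
  have hstab : T ∩ T⁻¹ ⊆ MulAction.stabilizer G V := by
    rintro g ⟨hgT, hgT'⟩
    refine MulAction.mem_stabilizer_iff.2 (subset_antisymm ?_ ?_)
    · exact (Set.smul_set_subset_mul hgT).trans hTV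
    · exact Set.subset_smul_set_iff.2 <|
        (Set.smul_set_subset_mul (Set.mem_inv.1 hgT')).trans hTV
  refine ⟨MulAction.stabilizer G V, Subgroup.isOpen_of_mem_nhds (g := 1) _ ?_, fun g hg => ?_⟩
  · exact Filter.mem_of_superset (Filter.inter_mem hT (inv_mem_nhds_one G hT)) hstab
  · rw [← MulAction.mem_stabilizer_iff.1 hg]
    simpa using Set.smul_mem_smul_set (a := g) h1V

theorem exists_isOpen_isCompact_subgroup_subset [T2Space G] [LocallyCompactSpace G]
    [TotallyDisconnectedSpace G] {Ω : Set G} (hΩ : IsOpen Ω) (h1Ω : (1 : G) ∈ Ω) :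
    ∃ U : Subgroup G, IsOpen (U : Set G) ∧ IsCompact (U : Set G) ∧ (U : Set G) ⊆ Ω := by
  obtain ⟨V, hVcomp, hVclopen, h1V, hVΩ⟩ := exists_isCompact_isClopen_subset hΩ h1Ω
  obtain ⟨U, hUopen, hUV⟩ :=
    exists_openSubgroup_subset_of_isCompact_isOpen hVcomp hVclopen.isOpen h1V
  exact ⟨U, hUopen, hVcomp.of_isClosed_subset (U.isClosed_of_isOpen hUopen) hUV, hUV.trans hVΩ⟩

end TopologicalGroup

theorem mem_quasiCentralizer_of_forall_commute_inf {G : Type*} [Group G] [TopologicalSpace G]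
    {H U : Subgroup G} (hU : IsOpen (U : Set G)) {g : G} (hg : ∀ v ∈ H ⊓ U, g * v = v * g) :
    g ∈ QuasiCentralizer H := by
  refine ⟨H ⊓ U, inf_le_left, ?_, hg⟩
  have hset : {k : H | (k : G) ∈ H ⊓ U} = Subtype.val ⁻¹' (U : Set G) := by
    ext k
    simp [Subgroup.mem_inf]
  rw [hset]
  exact hU.preimage continuous_subtype_val

namespace Subgroup

variable {G : Type*} [Group G]

theorem mem_normalCore_subgroupOf_iff {O W : Subgroup G} {x : O} :
    x ∈ (W.subgroupOf O).normalCore ↔ ∀ b ∈ O, b * (x : G) * b⁻¹ ∈ W := by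
  change (∀ b : O, b * x * b⁻¹ ∈ W.subgroupOf O) ↔ _
  simp [mem_subgroupOf]

theorem eq_one_of_forall_conj_mem_of_normalCore_eq_bot {H : Subgroup G} {OH WH : Subgroup H}
    (hWH : WH ≤ OH) (hcore : (WH.subgroupOf OH).normalCore = ⊥) {O W : Subgroup G}
    (hO : OH.map H.subtype ≤ O) (hW : ∀ h : H, (h : G) ∈ W → h ∈ WH) {g : G}
    (hgH : g ∈ H) (hg : ∀ b ∈ O, b * g * b⁻¹ ∈ W) : g = 1 := by
  have hgWH : (⟨g, hgH⟩ : H) ∈ WH := hW _ (by simpa using hg 1 O.one_mem)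
  have hcore_mem : (⟨⟨g, hgH⟩, hWH hgWH⟩ : OH) ∈ (WH.subgroupOf OH).normalCore :=
    mem_normalCore_subgroupOf_iff.2 fun b hb => hW _ (hg b (hO (mem_map_of_mem _ hb)))
  simpa [hcore] using hcore_mem

theorem normalCore_subgroupOf_eq_bot {H O W V : Subgroup G} (hON : O ≤ normalizer (H : Set G))
    (hVH : V ≤ H) (hVO : V ≤ O)
    (hcoreH : ∀ g ∈ H, (∀ b ∈ O, b * g * b⁻¹ ∈ W) → g = 1)
    (hcent : ∀ g : G, (∀ v ∈ V, g * v = v * g) → g ∈ H) :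
    (W.subgroupOf O).normalCore = ⊥ := by
  refine eq_bot_iff_forall _ |>.2 fun x hx => Subtype.ext ?_
  rw [mem_normalCore_subgroupOf_iff] at hx
  have hcomm : ∀ v ∈ V, (x : G) * v = v * x := by
    intro v hv
    have hcommH : (x : G) * v * (x : G)⁻¹ * v⁻¹ ∈ H :=
      H.mul_mem ((mem_normalizer_iff.1 (hON x.2) v).1 (hVH hv)) (H.inv_mem (hVH hv))
    have hcommW : ∀ b ∈ O, b * ((x : G) * v * (x : G)⁻¹ * v⁻¹) * b⁻¹ ∈ W := by
      intro b hb
      have hconj : b * ((x : G) * v * (x : G)⁻¹ * v⁻¹) * b⁻¹ =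
          (b * x * b⁻¹) * ((b * v) * x * (b * v)⁻¹)⁻¹ := by group
      rw [hconj]
      exact W.mul_mem (hx b hb) (W.inv_mem (hx _ (O.mul_mem hb (hVO hv))))
    exact mul_inv_eq_iff_eq_mul.1 (mul_inv_eq_one.1 (hcoreH _ hcommH hcommW))
  exact hcoreH x (hcent x hcomm) hx

end Subgroup

theorem stmt13_general (G : Type*) [Group G] [TopologicalSpace G] [IsTopologicalGroup G] [T2Space G] [TotallyDisconnectedSpace G] [LocallyCompactSpace G]
    (H : Subgroup G)
    (hHlocnorm : IsOpen ((Subgroup.normalizer (H : Set G) : Subgroup G) : Set G))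
    (hre : RegionallyExpansive ↥H)
    (hqc : QuasiCentralizer H ⊆ (H : Set G)) :
    RegionallyExpansive G := by
  obtain ⟨OH, WH, -, ⟨S, -, hScomp, hSgen⟩, hWHle, hWHopen, -, hWHcore⟩ := hre
  obtain ⟨Ω, hΩopen, hΩWH⟩ := isOpen_induced_iff.mp hWHopen
  have h1Ω : (1 : G) ∈ Ω := by
    simpa using (show (1 : H) ∈ Subtype.val ⁻¹' Ω from hΩWH ▸ WH.one_mem)
  obtain ⟨U, hUopen, hUcomp, hUN⟩ :=
    exists_isOpen_isCompact_subgroup_subset hHlocnorm (Subgroup.normalizer _).one_mem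
  obtain ⟨W, hWopen, hWcomp, hWUΩ⟩ :=
    exists_isOpen_isCompact_subgroup_subset (hUopen.inter hΩopen) ⟨U.one_mem, h1Ω⟩
  set O := Subgroup.closure ((U : Set G) ∪ Subtype.val '' S)
  have hUO : U ≤ O := fun u hu => Subgroup.subset_closure (Or.inl hu)
  have hON : O ≤ Subgroup.normalizer (H : Set G) :=
    Subgroup.closure_le _ |>.2 <| Set.union_subset hUN <|
      Set.image_subset_iff.2 fun h _ => Subgroup.le_normalizer h.2
  have hOHO : OH.map H.subtype ≤ O := by
    rw [← hSgen, MonoidHom.map_closure]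
    exact Subgroup.closure_mono Set.subset_union_right
  have hWWH : ∀ h : H, (h : G) ∈ W → h ∈ WH := fun h hh => by
    rw [← SetLike.mem_coe, ← hΩWH]
    exact (hWUΩ hh).2
  refine ⟨O, W, Subgroup.isOpen_mono hUO hUopen,
    ⟨_, Subgroup.subset_closure, hUcomp.union (hScomp.image continuous_subtype_val), rfl⟩,
    fun w hw => hUO (hWUΩ hw).1, hWopen, hWcomp,
    Subgroup.normalCore_subgroupOf_eq_bot hON inf_le_left (inf_le_right.trans hUO) ?_ ?_⟩
  · exact fun g hgH hg =>
      Subgroup.eq_one_of_forall_conj_mem_of_normalCore_eq_bot hWHle hWHcore hOHO hWWH hgH hg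
  · exact fun g hg => hqc (mem_quasiCentralizer_of_forall_commute_inf hUopen hg)

theorem stmt13 (G : Type*) [Group G] [TopologicalSpace G] [IsTopologicalGroup G] [T2Space G] [TotallyDisconnectedSpace G] [LocallyCompactSpace G]
    (H : Subgroup G) (hHclosed : IsClosed (H : Set G))
    (hHlocnorm : IsOpen ((Subgroup.normalizer (H : Set G) : Subgroup G) : Set G))
    (hre : RegionallyExpansive ↥H)
    (hqc : QuasiCentralizer H ⊆ (H : Set G)) :
    RegionallyExpansive G :=
  stmt13_general G H hHlocnorm hre hqc
end
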